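/- arXiv:2507.11596 — 2 statements merged into one kernel-verified Lean document; each statement's English description precedes it below -/
import Mathlib

section
/- Let k ≥ 2 be an integer and n ∈ ℤ. There exists a polynomial P ∈ ℤ[x] such that 𝓕_{n,k}(x) = x^{r_{n,k}} · P(x^k) (P evaluated at x^k). Moreover, if 𝓕_{n,k} is not the zero polynomial, then P can be chosen with P(0) ≠ 0; equivalently, every exponent j with nonzero coefficient in 𝓕_{n,k} satisfies j ≡ r_{n,k} (mod k), and the smallest such exponent is exactly r_{n,k}. -/
/-!
Every exponent occurring in `F n` is congruent to `1 - n` modulo `k`: the initial values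
`F 1 = 1`, `F 0 = ⋯ = F (2 - k) = 0` have this property, and the recurrence preserves it when
solved for its first term as well as for its last one, so it propagates in both directions.
Hence `F n = X ^ r * P (X ^ k)`, and it remains to see that the coefficient of `X ^ r` vanishes
only when `F n = 0`. For `n ≥ 1` all coefficients are nonnegative and some coefficient below
degree `k` is positive. For `n ≤ 0` write `1 - n = q k + r`; the three-term identity
`F n = (1 + X ^ k) F (n + k) - X F (n + k + 1)` yields the Pascal recurrence for the
coefficient of `X ^ r`, which is therefore `(-1) ^ r * q.choose r`, and also shows `F n = 0`
for `q < r`.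
-/

open Polynomial

namespace Int

theorem le_induction_window {k : ℕ} {a : ℤ} {P : ℤ → Prop} (base : ∀ i < k, P (a + i))
    (step : ∀ n, a + k ≤ n → (∀ i < k, P (n - 1 - i)) → P n) : ∀ n, a ≤ n → P n := by
  intro n hn
  obtain ⟨m, rfl⟩ : ∃ m : ℕ, n = a + m := ⟨(n - a).toNat, by omega⟩
  induction m using Nat.strong_induction_on with
  | _ m ih =>
    by_cases hm : m < k
    · exact base m hm
    refine step _ (by omega) fun i hi => ?_
    convert ih (m - 1 - i) (by omega) (by omega) using 1
    omega

theorem induction_window {k : ℕ} {a : ℤ} {P : ℤ → Prop} (base : ∀ i < k, P (a + i))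
    (up : ∀ n, a + k ≤ n → (∀ i < k, P (n - 1 - i)) → P n)
    (down : ∀ n, n < a → (∀ i < k, P (n + 1 + i)) → P n) (n : ℤ) : P n := by
  rcases le_or_gt a n with hn | hn
  · exact le_induction_window base up n hn
  · have hneg := le_induction_window (k := k) (P := fun m => P (-m)) (a := 1 - a - k)
      (fun i hi => by convert base (k - 1 - i) (by omega) using 2; omega)
      (fun m hm ih => down _ (by omega) fun i hi => by convert ih i hi using 2; ring)
      (-n) (by omega)
    simpa using hneg

end Int

namespace Polynomial

def exponentClass (R : Type*) [Semiring R] (k : ℕ) (c : ZMod k) : Submodule R R[X] where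
  carrier := {p | ∀ j, p.coeff j ≠ 0 → (j : ZMod k) = c}
  add_mem' {p q} hp hq j hj := by
    by_cases h : p.coeff j = 0
    · exact hq j (by simpa [h] using hj)
    · exact hp j h
  zero_mem' j hj := (hj (coeff_zero j)).elim
  smul_mem' a p hp j hj := hp j fun h => hj (by simp [h])

variable {R : Type*}

theorem X_pow_mul_mem_exponentClass [Semiring R] {k : ℕ} {c : ZMod k} {p : R[X]} (m : ℕ)
    (hp : p ∈ exponentClass R k c) : X ^ m * p ∈ exponentClass R k (c + m) := by
  intro j hj
  rw [coeff_X_pow_mul'] at hj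
  split_ifs at hj with hmj
  · rw [← Nat.sub_add_cancel hmj, Nat.cast_add, hp _ hj]
  · exact absurd rfl hj

theorem mod_eq_of_mem_exponentClass [Semiring R] {k r j : ℕ} (hr : r < k) {p : R[X]}
    (hp : p ∈ exponentClass R k r) (hj : p.coeff j ≠ 0) : j % k = r := by
  rw [← Nat.mod_eq_of_lt hr]
  exact (ZMod.natCast_eq_natCast_iff' _ _ _).mp (hp j hj)

theorem expand_contract_of_dvd [CommSemiring R] {k : ℕ} (hk : k ≠ 0) {f : R[X]}
    (h : ∀ j, f.coeff j ≠ 0 → k ∣ j) : expand R k (contract k f) = f := by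
  ext n
  rw [coeff_expand hk.bot_lt, coeff_contract hk]
  split_ifs with hn
  · rw [Nat.div_mul_cancel hn]
  · exact (not_imp_comm.mp (h n) hn).symm

theorem exists_eq_X_pow_mul_expand_of_mem_exponentClass [CommSemiring R] {k r : ℕ} (hr : r < k)
    {p : R[X]} (hp : p ∈ exponentClass R k r) :
    ∃ P : R[X], p = X ^ r * expand R k P ∧ P.coeff 0 = p.coeff r := by
  have hlow : ∀ d < r, p.coeff d = 0 := fun d hd => by
    by_contra hne
    have := mod_eq_of_mem_exponentClass hr hp hne
    rw [Nat.mod_eq_of_lt (hd.trans hr)] at this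
    omega
  obtain ⟨q, rfl⟩ := X_pow_dvd_iff.mpr hlow
  have hdvd : ∀ j, q.coeff j ≠ 0 → k ∣ j := fun j hj => by
    rw [← coeff_X_pow_mul q r j] at hj
    have := hp _ hj
    rw [Nat.cast_add, add_eq_right] at this
    exact (ZMod.natCast_eq_zero_iff _ _).mp this
  refine ⟨contract k q, by rw [expand_contract_of_dvd (by omega) hdvd], ?_⟩
  rw [coeff_contract (by omega), zero_mul, ← coeff_X_pow_mul q r 0, zero_add]

end Polynomial

section KFibonacci

variable {k : ℕ} {F : ℤ → ℤ[X]}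

theorem kFib_three_term (hk : 0 < k)
    (hrec : ∀ n : ℤ, F n = ∑ i ∈ Finset.range k, X ^ (k - 1 - i) * F (n - 1 - (i : ℤ))) (n : ℤ) :
    F n = (1 + X ^ k) * F (n + k) - X * F (n + k + 1) := by
  obtain ⟨k, rfl⟩ : ∃ k', k = k' + 1 := ⟨k - 1, by omega⟩
  simp only [Nat.add_sub_cancel] at hrec
  have hnext := hrec (n + ↑(k + 1) + 1)
  have hcur := hrec (n + ↑(k + 1))
  rw [Finset.sum_range_succ'] at hnext
  rw [Finset.sum_range_succ, Nat.sub_self, pow_zero, one_mul,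
    show n + ↑(k + 1) - 1 - k = n by push_cast; ring] at hcur
  have hshift : X * ∑ i ∈ Finset.range k, X ^ (k - (i + 1)) * F (n + ↑(k + 1) - ↑(i + 1)) =
      ∑ i ∈ Finset.range k, X ^ (k - i) * F (n + ↑(k + 1) - 1 - i) := by
    rw [Finset.mul_sum]
    refine Finset.sum_congr rfl fun i hi => ?_
    rw [← mul_assoc, ← pow_succ', show k - (i + 1) + 1 = k - i by simp at hi; omega]
    congr 2
    push_cast
    ring
  rw [Nat.sub_zero, Nat.cast_zero, sub_zero, add_sub_cancel_right] at hnext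
  linear_combination X * hnext - hcur + hshift

theorem kFib_mem_exponentClass (hk : 0 < k)
    (hrec : ∀ n : ℤ, F n = ∑ i ∈ Finset.range k, X ^ (k - 1 - i) * F (n - 1 - (i : ℤ)))
    (hF1 : F 1 = 1) (hF0 : ∀ m : ℕ, m ≤ k - 2 → F (-(m : ℤ)) = 0) (n : ℤ) :
    F n ∈ exponentClass ℤ k (1 - n) := by
  have hterm : ∀ m : ℤ, ∀ i < k, F (m - 1 - i) ∈ exponentClass ℤ k (1 - (m - 1 - i : ℤ)) →
      X ^ (k - 1 - i) * F (m - 1 - i) ∈ exponentClass ℤ k (1 - m) := fun m i hi h => by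
    convert X_pow_mul_mem_exponentClass (k - 1 - i) h using 2
    rw [Nat.sub_sub, Nat.cast_sub (by omega), ZMod.natCast_self]
    push_cast
    ring
  refine Int.induction_window (k := k) (a := 2 - k) (P := fun n => F n ∈ exponentClass ℤ k (1 - n))
    (fun i hi => ?_) (fun m _ ih => ?_) (fun m _ ih => ?_) n
  · rcases eq_or_lt_of_le (Nat.le_sub_one_of_lt hi) with rfl | hlt
    · rw [show 2 - (k : ℤ) + ↑(k - 1) = 1 by omega, hF1]
      intro j hj
      rw [coeff_one] at hj
      split_ifs at hj with h
      · simp [h]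
      · exact absurd rfl hj
    · rw [show 2 - (k : ℤ) + i = -↑(k - 2 - i) by omega, hF0 _ (by omega)]
      exact zero_mem _
  · rw [hrec m]
    exact Submodule.sum_mem _ fun i hi =>
      hterm m i (Finset.mem_range.mp hi) (ih i (Finset.mem_range.mp hi))
  · have h := hrec (m + k)
    rw [← Finset.add_sum_erase _ _ (Finset.mem_range.mpr (Nat.sub_one_lt hk.ne')), Nat.sub_self,
      pow_zero, one_mul, show m + k - 1 - ((k - 1 : ℕ) : ℤ) = m by omega] at h
    have hper : ((m + k : ℤ) : ZMod k) = m := by push_cast; simp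
    have htop := ih (k - 1) (by omega)
    rw [show m + 1 + ((k - 1 : ℕ) : ℤ) = m + k by omega, hper] at htop
    rw [eq_sub_of_add_eq h.symm]
    refine Submodule.sub_mem _ htop (Submodule.sum_mem _ fun i hi => ?_)
    obtain ⟨hi_ne, hi_mem⟩ := Finset.mem_erase.mp hi
    have hik := Finset.mem_range.mp hi_mem
    rw [← hper]
    refine hterm _ i hik ?_
    have hwin := ih (k - 2 - i) (by omega)
    rwa [show m + 1 + ((k - 2 - i : ℕ) : ℤ) = m + k - 1 - i by omega] at hwin

theorem kFib_coeff_nonneg_and_exists_pos (hk : 0 < k)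
    (hrec : ∀ n : ℤ, F n = ∑ i ∈ Finset.range k, X ^ (k - 1 - i) * F (n - 1 - (i : ℤ)))
    (hF1 : F 1 = 1) (hF0 : ∀ m : ℕ, m ≤ k - 2 → F (-(m : ℤ)) = 0) :
    ∀ n : ℤ, 2 - k ≤ n → (∀ j, 0 ≤ (F n).coeff j) ∧ (1 ≤ n → ∃ j < k, 0 < (F n).coeff j) := by
  refine Int.le_induction_window (k := k) (fun i hi => ?_) (fun n hn ih => ?_)
  · rcases eq_or_lt_of_le (Nat.le_sub_one_of_lt hi) with rfl | hlt
    · rw [show 2 - (k : ℤ) + ↑(k - 1) = 1 by omega, hF1]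
      refine ⟨fun j => ?_, fun _ => ⟨0, hk, by simp⟩⟩
      rw [coeff_one]
      split_ifs <;> norm_num
    · rw [show 2 - (k : ℤ) + i = -↑(k - 2 - i) by omega, hF0 _ (by omega)]
      exact ⟨fun j => le_rfl, fun h => by omega⟩
  have hterm : ∀ i ∈ Finset.range k, ∀ j, 0 ≤ (X ^ (k - 1 - i) * F (n - 1 - i)).coeff j := by
    intro i hi j
    rw [coeff_X_pow_mul']
    split_ifs
    · exact (ih i (Finset.mem_range.mp hi)).1 _
    · exact le_rfl
  have hle : ∀ i ∈ Finset.range k, ∀ j,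
      (X ^ (k - 1 - i) * F (n - 1 - i)).coeff j ≤ (F n).coeff j := by
    intro i hi j
    rw [hrec n, finsetSum_coeff]
    exact Finset.single_le_sum (fun i hi => hterm i hi j) hi
  refine ⟨fun j => ?_, fun _ => ?_⟩
  · rw [hrec n, finsetSum_coeff]
    exact Finset.sum_nonneg fun i hi => hterm i hi j
  rcases le_or_gt n k with hnk | hnk
  · -- witness: the summand `X ^ (k + 1 - n) * F 1`
    obtain ⟨i, rfl⟩ : ∃ i : ℕ, n = i + 2 := ⟨(n - 2).toNat, by omega⟩
    refine ⟨k - 1 - i, by omega, lt_of_lt_of_le ?_ (hle i (by simp; omega) _)⟩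
    rw [show (i : ℤ) + 2 - 1 - i = 1 by ring, hF1, mul_one, coeff_X_pow_self]
    exact one_pos
  · obtain ⟨j, hj, hpos⟩ := (ih (k - 1) (by omega)).2 (by omega)
    refine ⟨j, hj, lt_of_lt_of_le ?_ (hle (k - 1) (by simp; omega) j)⟩
    rwa [Nat.sub_self, pow_zero, one_mul]

theorem kFib_neg_eq_zero (hk : 0 < k)
    (hrec : ∀ n : ℤ, F n = ∑ i ∈ Finset.range k, X ^ (k - 1 - i) * F (n - 1 - (i : ℤ)))
    (hF0 : ∀ m : ℕ, m ≤ k - 2 → F (-(m : ℤ)) = 0) {q r : ℕ} (hr : r < k) (hqr : q < r) :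
    F (1 - (q * k + r : ℕ)) = 0 := by
  induction q generalizing r with
  | zero =>
    rw [show 1 - ((0 * k + r : ℕ) : ℤ) = -↑(r - 1) by push_cast; omega]
    exact hF0 _ (by omega)
  | succ q ih =>
    rw [kFib_three_term hk hrec, show 1 - (((q + 1) * k + r : ℕ) : ℤ) + k = 1 - (q * k + r : ℕ) by
      push_cast; ring, show 1 - ((q * k + r : ℕ) : ℤ) + 1 = 1 - (q * k + (r - 1) : ℕ) by
      push_cast [Nat.cast_sub (by omega : 1 ≤ r)]; ring, ih hr (by omega), ih (by omega) (by omega)]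
    ring

theorem kFib_neg_coeff (hk : 0 < k)
    (hrec : ∀ n : ℤ, F n = ∑ i ∈ Finset.range k, X ^ (k - 1 - i) * F (n - 1 - (i : ℤ)))
    (hF1 : F 1 = 1) (hF0 : ∀ m : ℕ, m ≤ k - 2 → F (-(m : ℤ)) = 0) (q : ℕ) {r : ℕ} (hr : r < k) :
    (F (1 - (q * k + r : ℕ))).coeff r = (-1) ^ r * q.choose r := by
  induction q generalizing r with
  | zero =>
    rcases Nat.eq_zero_or_pos r with rfl | hr0
    · simp [hF1]
    · rw [show 1 - ((0 * k + r : ℕ) : ℤ) = -↑(r - 1) by push_cast; omega, hF0 _ (by omega),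
        Nat.choose_eq_zero_of_lt hr0]
      simp
  | succ q ih =>
    rw [kFib_three_term hk hrec, show 1 - (((q + 1) * k + r : ℕ) : ℤ) + k = 1 - (q * k + r : ℕ) by
      push_cast; ring, coeff_sub, add_mul, coeff_add, one_mul, coeff_X_pow_mul', if_neg (by omega),
      add_zero, ih hr]
    rcases Nat.eq_zero_or_pos r with rfl | hr0
    · simp
    · obtain ⟨r, rfl⟩ : ∃ r', r = r' + 1 := ⟨r - 1, by omega⟩
      rw [coeff_X_mul, show 1 - ((q * k + (r + 1) : ℕ) : ℤ) + 1 = 1 - (q * k + r : ℕ) by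
        push_cast; ring, ih (by omega), Nat.choose_succ_succ', pow_succ]
      push_cast
      ring

theorem kFib_coeff_ne_zero (hk : 0 < k)
    (hrec : ∀ n : ℤ, F n = ∑ i ∈ Finset.range k, X ^ (k - 1 - i) * F (n - 1 - (i : ℤ)))
    (hF1 : F 1 = 1) (hF0 : ∀ m : ℕ, m ≤ k - 2 → F (-(m : ℤ)) = 0) {n : ℤ} {r : ℕ} (hrk : r < k)
    (hr : (r : ZMod k) = 1 - n) (hne : F n ≠ 0) : (F n).coeff r ≠ 0 := by
  have hmem : F n ∈ exponentClass ℤ k r := hr ▸ kFib_mem_exponentClass hk hrec hF1 hF0 n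
  rcases le_or_gt 1 n with hn | hn
  · obtain ⟨j, hj, hpos⟩ := (kFib_coeff_nonneg_and_exists_pos hk hrec hF1 hF0 n (by omega)).2 hn
    have hjr := mod_eq_of_mem_exponentClass hrk hmem hpos.ne'
    rw [Nat.mod_eq_of_lt hj] at hjr
    exact hjr ▸ hpos.ne'
  · obtain ⟨t, rfl⟩ : ∃ t : ℕ, n = 1 - t := ⟨(1 - n).toNat, by omega⟩
    have htr : t % k = r := by
      rw [← Nat.mod_eq_of_lt hrk, ← ZMod.natCast_eq_natCast_iff', hr]
      push_cast
      ring
    rw [← Nat.div_add_mod' t k, htr] at hne ⊢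
    have hqr : r ≤ t / k := by
      by_contra h
      exact hne (kFib_neg_eq_zero hk hrec hF0 hrk (by omega))
    rw [kFib_neg_coeff hk hrec hF1 hF0 _ hrk]
    exact mul_ne_zero (by simp) (Nat.cast_ne_zero.mpr (Nat.choose_pos hqr).ne')

end KFibonacci

/-- `F n = x^r · P(x^k)` for some `P ∈ ℤ[x]`, where `r = r_{n,k}`; moreover,
if `F n ≠ 0` then `P` can be chosen with `P(0) ≠ 0`; equivalently every exponent with
nonzero coefficient is `≡ r (mod k)` and the smallest such exponent is exactly `r`. -/
theorem fib_poly_structure (k : ℕ) (hk : 2 ≤ k)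
    (F : ℤ → Polynomial ℤ)
    (hrec : ∀ n : ℤ, F n = ∑ i ∈ Finset.range k, X ^ (k - 1 - i) * F (n - 1 - (i : ℤ)))
    (hF1 : F 1 = 1)
    (hF0 : ∀ m : ℕ, m ≤ k - 2 → F (-(m : ℤ)) = 0)
    (n : ℤ) (r : ℕ)
    (hr : r = if 0 < n then ((k - 1) * (n - 1).toNat) % k else ((-n).toNat + 1) % k) :
    (∃ P : Polynomial ℤ, F n = X ^ r * P.comp (X ^ k)) ∧
    (F n ≠ 0 →
      (∃ P : Polynomial ℤ, F n = X ^ r * P.comp (X ^ k) ∧ P.coeff 0 ≠ 0) ∧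
      (∀ j : ℕ, (F n).coeff j ≠ 0 → j % k = r) ∧
      (F n).coeff r ≠ 0 ∧ (∀ j : ℕ, j < r → (F n).coeff j = 0)) := by
  have hk0 : 0 < k := by omega
  have hrk : r < k := by split_ifs at hr <;> exact hr ▸ Nat.mod_lt _ hk0
  have hrn : (r : ZMod k) = 1 - n := by
    have htoNat (a : ℤ) (ha : 0 ≤ a) : ((a.toNat : ℕ) : ZMod k) = a := by
      rw [← Int.cast_natCast, Int.toNat_of_nonneg ha]
    split_ifs at hr with hn <;> rw [hr, ZMod.natCast_mod]
    · rw [Nat.cast_mul, htoNat _ (by omega), Nat.cast_sub (by omega), ZMod.natCast_self]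
      push_cast
      ring
    · rw [Nat.cast_add, htoNat _ (by omega)]
      push_cast
      ring
  have hmem : F n ∈ exponentClass ℤ k r := hrn ▸ kFib_mem_exponentClass hk0 hrec hF1 hF0 n
  have hmod j : (F n).coeff j ≠ 0 → j % k = r := mod_eq_of_mem_exponentClass hrk hmem
  obtain ⟨P, hP, hP0⟩ := exists_eq_X_pow_mul_expand_of_mem_exponentClass hrk hmem
  rw [expand_eq_comp_X_pow] at hP
  refine ⟨⟨P, hP⟩, fun hne => ?_⟩
  have hcoeff := kFib_coeff_ne_zero hk0 hrec hF1 hF0 hrk hrn hne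
  refine ⟨⟨P, hP, hP0 ▸ hcoeff⟩, hmod, hcoeff, fun j hj => ?_⟩
  by_contra hne
  have := hmod j hne
  rw [Nat.mod_eq_of_lt (hj.trans hrk)] at this
  omega
end

section
/- Let k ≥ 2 be an integer. For every n ∈ ℤ, the polynomial x^k + 1 divides x·𝓕_{n+k+1,k}(x) + 𝓕_{n,k}(x) in ℤ[x]. -/
open Polynomial Finset

section LinearRecurrence

variable {R : Type*} [CommRing R] {x : R} {k : ℕ} {F : ℤ → R}

lemma eq_sum_pow_mul_of_recurrence
    (hrec : ∀ n : ℤ, F n = ∑ i ∈ range k, x ^ (k - 1 - i) * F (n - 1 - i)) (n : ℤ) :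
    F (n + k) = ∑ j ∈ range k, x ^ j * F (n + j) := by
  rw [hrec, ← sum_range_reflect]
  refine sum_congr rfl fun j hj => ?_
  have hjk := mem_range.1 hj
  congr 2 <;> omega

/-- Both sides equal `∑ j ∈ range (k + 1), x ^ j * F (n + j)`, split off at either end. -/
lemma mul_add_eq_mul_of_recurrence
    (hrec : ∀ n : ℤ, F n = ∑ i ∈ range k, x ^ (k - 1 - i) * F (n - 1 - i)) (n : ℤ) :
    x * F (n + k + 1) + F n = (x ^ k + 1) * F (n + k) := by
  calc x * F (n + k + 1) + F n = ∑ j ∈ range (k + 1), x ^ j * F (n + j) := by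
        rw [sum_range_succ', add_right_comm, eq_sum_pow_mul_of_recurrence hrec, mul_sum]
        simp only [pow_succ, Nat.cast_add, Nat.cast_one, Nat.cast_zero, pow_zero, add_zero,
          one_mul]
        congr 1
        refine sum_congr rfl fun j _ => ?_
        rw [add_assoc, add_comm 1]
        ring
    _ = (x ^ k + 1) * F (n + k) := by
        rw [sum_range_succ, ← eq_sum_pow_mul_of_recurrence hrec]
        ring

end LinearRecurrence

theorem fib_poly_period_div_general (k : ℕ)
    (F : ℤ → Polynomial ℤ)
    (hrec : ∀ n : ℤ, F n = ∑ i ∈ Finset.range k, X ^ (k - 1 - i) * F (n - 1 - (i : ℤ))) :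
    ∀ n : ℤ, (X ^ k + 1) ∣ (X * F (n + k + 1) + F n) := fun n =>
  ⟨F (n + k), mul_add_eq_mul_of_recurrence hrec n⟩

/-- For every `n ∈ ℤ`, `x^k + 1` divides `x·F(n+k+1) + F n` in `ℤ[x]`. -/
theorem fib_poly_period_div (k : ℕ) (hk : 2 ≤ k)
    (F : ℤ → Polynomial ℤ)
    (hrec : ∀ n : ℤ, F n = ∑ i ∈ Finset.range k, X ^ (k - 1 - i) * F (n - 1 - (i : ℤ)))
    (hF1 : F 1 = 1)
    (hF0 : ∀ m : ℕ, m ≤ k - 2 → F (-(m : ℤ)) = 0) :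
    ∀ n : ℤ, (X ^ k + 1) ∣ (X * F (n + k + 1) + F n) :=
  fib_poly_period_div_general k F hrec
end
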